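/- arXiv:1706.04150 — 2 statements merged into one kernel-verified Lean document; each statement's English description precedes it below -/
import Mathlib

section
/- Let P(λ) = ∑_{i=0}^{k} A_i λ^i be an n×n complex matrix polynomial of odd degree k ≥ 3. Then for every λ ∈ ℂ: ℛ_P(λ) · (S R Δ(λ)) = S R (e_k ⊗ I_n) · P(λ), where e_k ⊗ I_n is the kn×n matrix whose last n×n block is I_n and whose remaining blocks are zero. -/
open Finset Matrix

noncomputable section
namespace MPoly

abbrev Mat (n : ℕ) := Matrix (Fin n) (Fin n) ℂ

variable {n : ℕ}

/-- Euclidean norm of a complex vector. -/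
def vecNorm {ι : Type*} [Fintype ι] (x : ι → ℂ) : ℝ :=
  Real.sqrt (∑ i, ‖x i‖ ^ 2)

/-- Spectral norm (operator norm induced by the Euclidean vector norm). -/
def specNorm {ι κ : Type*} [Fintype ι] [Fintype κ] [DecidableEq κ] (M : Matrix ι κ ℂ) : ℝ :=
  ‖LinearMap.toContinuousLinearMap (Matrix.toEuclideanLin M)‖

/-- Evaluation of the matrix polynomial `P(λ) = ∑_{i=0}^k A_i λ^i`. -/
def Peval (k : ℕ) (A : ℕ → Mat n) (lam : ℂ) : Mat n :=
  ∑ i ∈ Finset.range (k + 1), lam ^ i • A i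

/-- Derivative `P′(λ) = ∑_{i=1}^k i A_i λ^{i-1}`. -/
def Pderiv (k : ℕ) (A : ℕ → Mat n) (lam : ℂ) : Mat n :=
  ∑ i ∈ Finset.range k, (((i : ℂ) + 1) * lam ^ i) • A (i + 1)

/-- `i`-th Horner shift `P_i(λ) = ∑_{j=0}^i λ^j A_{k-i+j}`. -/
def horner (k : ℕ) (A : ℕ → Mat n) (i : ℕ) (lam : ℂ) : Mat n :=
  ∑ j ∈ Finset.range (i + 1), lam ^ j • A (k - i + j)

/-- `P^i(λ) = ∑_{j=0}^i λ^j A_j`. -/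
def lowPart (A : ℕ → Mat n) (i : ℕ) (lam : ℂ) : Mat n :=
  ∑ j ∈ Finset.range (i + 1), lam ^ j • A j

/-- `q`-th (0-indexed) block of `Δ(λ)`. -/
def DeltaBlock (k : ℕ) (A : ℕ → Mat n) (lam : ℂ) (q : ℕ) : Mat n :=
  if q % 2 = 0 then lam ^ ((k - 1 - q) / 2) • (1 : Mat n)
  else lam ^ ((k - q) / 2) • horner k A q lam

/-- The kn×n matrix `Δ(λ)`. -/
def Delta (k : ℕ) (A : ℕ → Mat n) (lam : ℂ) : Matrix (Fin k × Fin n) (Fin n) ℂ :=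
  Matrix.of fun p b => DeltaBlock k A lam p.1.1 p.2 b

/-- The n×kn block-transpose `Δᴮ(λ)`. -/
def DeltaB (k : ℕ) (A : ℕ → Mat n) (lam : ℂ) : Matrix (Fin n) (Fin k × Fin n) ℂ :=
  Matrix.of fun a q => DeltaBlock k A lam q.1.1 a q.2

/-- (0-indexed) blocks of `𝒯₁`. -/
def T1Block (k : ℕ) (A : ℕ → Mat n) (i j : ℕ) : Mat n :=
  if i = j then (if i % 2 = 0 then A (k - i) else 0)
  else if (j = i + 1 ∧ i % 2 = 1) ∨ (i = j + 1 ∧ j % 2 = 1) then 1 else 0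

/-- (0-indexed) blocks of `𝒯₀`. -/
def T0Block (k : ℕ) (A : ℕ → Mat n) (i j : ℕ) : Mat n :=
  if i = j then (if i % 2 = 0 then -(A (k - i - 1)) else 0)
  else if (j = i + 1 ∧ i % 2 = 0) ∨ (i = j + 1 ∧ j % 2 = 0) then 1 else 0

/-- `𝒯₁`. -/
def TT1 (k : ℕ) (A : ℕ → Mat n) : Matrix (Fin k × Fin n) (Fin k × Fin n) ℂ :=
  Matrix.of fun p q => T1Block k A p.1.1 q.1.1 p.2 q.2

/-- `𝒯₀`. -/
def TT0 (k : ℕ) (A : ℕ → Mat n) : Matrix (Fin k × Fin n) (Fin k × Fin n) ℂ :=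
  Matrix.of fun p q => T0Block k A p.1.1 q.1.1 p.2 q.2

/-- The pencil `𝒯_P(λ) = λ𝒯₁ - 𝒯₀`. -/
def Tpencil (k : ℕ) (A : ℕ → Mat n) (lam : ℂ) : Matrix (Fin k × Fin n) (Fin k × Fin n) ℂ :=
  lam • TT1 k A - TT0 k A

/-- Block anti-diagonal flip matrix `R`. -/
def Rmat (k n : ℕ) : Matrix (Fin k × Fin n) (Fin k × Fin n) ℂ :=
  Matrix.of fun p q => if p.1.1 + q.1.1 = k - 1 ∧ p.2 = q.2 then 1 else 0

/-- Block-diagonal sign matrix `S` (block `i` (1-indexed) is `-I` iff `i ≡ 0,1 mod 4`). -/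
def Smat (k n : ℕ) : Matrix (Fin k × Fin n) (Fin k × Fin n) ℂ :=
  Matrix.of fun p q =>
    if p = q then (if (p.1.1 + 1) % 4 = 0 ∨ (p.1.1 + 1) % 4 = 1 then -1 else 1) else 0

/-- `D = diag(I, -I, I, …, I)`. -/
def Dmat (k n : ℕ) : Matrix (Fin k × Fin n) (Fin k × Fin n) ℂ :=
  Matrix.of fun p q => if p = q then ((-1 : ℂ)) ^ p.1.1 else 0

/-- `e_k ⊗ I_n`: kn×n matrix with last block `I_n`. -/
def ekI (k n : ℕ) : Matrix (Fin k × Fin n) (Fin n) ℂ :=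
  Matrix.of fun p b => if p.1.1 = k - 1 ∧ p.2 = b then 1 else 0

/-- The pencil `ℛ_P(λ) = S R 𝒯_P(λ) R S`. -/
def Rpencil (k : ℕ) (A : ℕ → Mat n) (lam : ℂ) : Matrix (Fin k × Fin n) (Fin k × Fin n) ℂ :=
  Smat k n * Rmat k n * Tpencil k A lam * Rmat k n * Smat k n

/-- `max_{i=0:k} ‖A_i‖₂`. -/
def maxA (k : ℕ) (A : ℕ → Mat n) : ℝ :=
  (Finset.range (k + 1)).sup' Finset.nonempty_range_add_one fun i => specNorm (A i)

/-- `max_{i=0:k} max{1, ‖A_i‖₂}`. -/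
def maxA1 (k : ℕ) (A : ℕ → Mat n) : ℝ :=
  (Finset.range (k + 1)).sup' Finset.nonempty_range_add_one fun i => max 1 (specNorm (A i))

/-- The quantity `d₁(δ)`. -/
def d1 (k : ℕ) (δ : ℂ) : ℝ :=
  ∑ r ∈ Finset.range ((k - 1) / 2 + 1), ‖δ‖ ^ (2 * r)
    + ∑ r ∈ Finset.Icc 1 ((k - 1) / 2),
        ((k : ℝ) - 2 * r + 1) * ∑ s ∈ Finset.Icc r (k - r), ‖δ‖ ^ (2 * s)

/-- `ρ₁`. -/
def rho1 (k : ℕ) (A : ℕ → Mat n) : ℝ :=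
  ((Finset.range (k + 1)).sup' Finset.nonempty_range_add_one fun i => max 1 (specNorm (A i) ^ 3))
    / min (specNorm (A k)) (specNorm (A 0))

/-- `ρ₂`. -/
def rho2 (k : ℕ) (A : ℕ → Mat n) : ℝ :=
  min (max 1 (specNorm (A k))) (max 1 (specNorm (A 0))) / maxA k A

/-- `ρ′`. -/
def rho' (k : ℕ) (A : ℕ → Mat n) : ℝ :=
  ((Finset.range (k + 1)).sup' Finset.nonempty_range_add_one fun i => max 1 (specNorm (A i) ^ 2))
    / min (specNorm (A k)) (specNorm (A 0))

/-- `det P(λ)` as a polynomial in `λ`. -/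
def detPoly (k : ℕ) (A : ℕ → Mat n) : Polynomial ℂ :=
  (∑ i ∈ Finset.range (k + 1), (Polynomial.X : Polynomial ℂ) ^ i • (A i).map Polynomial.C).det

/-- `L₁¹` (leading coefficient of `D₁(λ,P)`). -/
def D1L1 (k : ℕ) (A : ℕ → Mat n) : Matrix (Fin k × Fin n) (Fin k × Fin n) ℂ :=
  Matrix.of fun p q =>
    (if p.1.1 = 0 ∧ q.1.1 = 0 then A k
     else if 1 ≤ p.1.1 ∧ 1 ≤ q.1.1 ∧ p.1.1 + q.1.1 ≤ k then -(A (k - p.1.1 - q.1.1))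
     else 0) p.2 q.2

/-- `L₀¹` (trailing coefficient of `D₁(λ,P)`). -/
def D1L0 (k : ℕ) (A : ℕ → Mat n) : Matrix (Fin k × Fin n) (Fin k × Fin n) ℂ :=
  Matrix.of fun p q =>
    (if p.1.1 + q.1.1 + 1 ≤ k then -(A (k - 1 - p.1.1 - q.1.1)) else 0) p.2 q.2

/-- `L₁ᵏ` (leading coefficient of `D_k(λ,P)`). -/
def DkL1 (k : ℕ) (A : ℕ → Mat n) : Matrix (Fin k × Fin n) (Fin k × Fin n) ℂ :=
  Matrix.of fun p q =>
    (if k - 1 ≤ p.1.1 + q.1.1 then A (2 * k - 1 - p.1.1 - q.1.1) else 0) p.2 q.2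

/-- `L₀ᵏ` (trailing coefficient of `D_k(λ,P)`). -/
def DkL0 (k : ℕ) (A : ℕ → Mat n) : Matrix (Fin k × Fin n) (Fin k × Fin n) ℂ :=
  Matrix.of fun p q =>
    (if p.1.1 = k - 1 ∧ q.1.1 = k - 1 then -(A 0)
     else if p.1.1 ≤ k - 2 ∧ q.1.1 ≤ k - 2 ∧ k - 2 ≤ p.1.1 + q.1.1
       then A (2 * k - 2 - p.1.1 - q.1.1)
     else 0) p.2 q.2

/-- `X₁` (leading coefficient of the first companion form `C₁(λ)`). -/
def C1X (k : ℕ) (A : ℕ → Mat n) : Matrix (Fin k × Fin n) (Fin k × Fin n) ℂ :=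
  Matrix.of fun p q =>
    (if p.1 = q.1 then (if p.1.1 = 0 then A k else (1 : Mat n)) else 0) p.2 q.2

/-- `Y₁` (trailing coefficient of the first companion form `C₁(λ)`). -/
def C1Y (k : ℕ) (A : ℕ → Mat n) : Matrix (Fin k × Fin n) (Fin k × Fin n) ℂ :=
  Matrix.of fun p q =>
    (if p.1.1 = 0 then -(A (k - 1 - q.1.1))
     else if p.1.1 = q.1.1 + 1 then (1 : Mat n) else 0) p.2 q.2

/-! Both `S` and `R` (the permutation matrix of the block reversal `i ↦ k - 1 - i`) are
involutions, so the identity reduces to `𝒯_P(λ) Δ(λ) = (e_k ⊗ I_n) P(λ)`, which is checked one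
block row at a time, `𝒯_P` being block tridiagonal. Write `k = 2m + 1` and count block rows from 0.
An odd block row only meets the identity blocks `λ^(m-j) I` and `λ^(m-j-1) I` of `Δ`, and they
cancel. An even block row `2j` reduces, through two steps of the Horner recursion
`P_{i+1} = λ P_i + A_{k-i-1}`, to `λ^(m-j) P_{2j+1} - λ^(m-j) P_{2j+1}` for `j < m`,
and to `P_k = P` in the last row. -/

end MPoly

lemma Matrix.of_blocks_mul_of_blocks {ι κ α β γ R : Type*} [Fintype κ] [Fintype β]
    [NonUnitalNonAssocSemiring R] (B : ι → κ → Matrix α β R) (C : κ → Matrix β γ R) :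
    (Matrix.of fun (p : ι × α) (q : κ × β) => B p.1 q.1 p.2 q.2) *
        Matrix.of (fun (q : κ × β) c => C q.1 q.2 c)
      = Matrix.of fun p c => (∑ q, B p.1 q * C q) p.2 c := by
  ext p c
  simp only [mul_apply, of_apply, Fintype.sum_prod_type, Matrix.sum_apply]

lemma Finset.sum_range_eq_of_tridiagonal {M : Type*} [AddCommMonoid M] {k i : ℕ} (hi : i < k)
    (F : ℕ → M) (hF : ∀ q, q ≠ i → q ≠ i + 1 → i ≠ q + 1 → F q = 0) :
    ∑ q ∈ range k, F q
      = (if i = 0 then 0 else F (i - 1)) + F i + (if i + 1 < k then F (i + 1) else 0) := by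
  have split : ∀ q, F q = (if q + 1 = i then F q else 0) + (if q = i then F q else 0)
      + (if q = i + 1 then F q else 0) := by
    intro q
    by_cases h2 : q = i
    · simp [h2]
    by_cases h3 : q = i + 1
    · simp [h3, show i + 1 + 1 ≠ i by omega]
    by_cases h1 : q + 1 = i
    · simp [h1, h2, h3]
    · simp [h1, h2, h3, hF q h2 h3 (Ne.symm h1)]
  rw [sum_congr rfl fun q _ => split q, sum_add_distrib, sum_add_distrib, sum_ite_eq',
    sum_ite_eq']
  simp only [mem_range, if_pos hi]
  congr 2
  rcases i with _ | i
  · simp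
  · simp only [add_left_inj, sum_ite_eq', mem_range]
    simp [show i < k by omega]

namespace MPoly

lemma Smat_eq_diagonal (k n : ℕ) :
    Smat k n = diagonal fun p => if (p.1.1 + 1) % 4 = 0 ∨ (p.1.1 + 1) % 4 = 1 then -1 else 1 := by
  ext p q
  simp [Smat, diagonal_apply]

lemma Smat_mul_self (k n : ℕ) : Smat k n * Smat k n = 1 := by
  rw [Smat_eq_diagonal, diagonal_mul_diagonal, ← diagonal_one]
  congr 1
  ext p
  split_ifs <;> norm_num

lemma Rmat_eq_permMatrix (k n : ℕ) :
    Rmat k n = Equiv.Perm.permMatrix ℂ (Equiv.prodCongr Fin.revPerm (Equiv.refl (Fin n))) := by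
  ext p q
  have hp := p.1.2
  simp only [Rmat, of_apply, PEquiv.toMatrix_apply, Equiv.toPEquiv_apply, Option.mem_def,
    Option.some.injEq, Equiv.prodCongr_apply, Prod.map, Fin.revPerm_apply, Equiv.refl_apply,
    Prod.ext_iff, Fin.ext_iff, Fin.val_rev]
  congr 1
  simp only [eq_iff_iff, and_congr_left_iff]
  omega

lemma Rmat_mul_self (k n : ℕ) : Rmat k n * Rmat k n = 1 := by
  rw [Rmat_eq_permMatrix, ← permMatrix_mul]
  convert permMatrix_one
  ext p <;> simp

section

variable {k : ℕ} (A : ℕ → Mat n) (lam : ℂ)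

lemma horner_zero : horner k A 0 lam = A k := by
  simp [horner]

lemma horner_succ {i : ℕ} (hi : i < k) :
    horner k A (i + 1) lam = lam • horner k A i lam + A (k - (i + 1)) := by
  simp only [horner]
  rw [sum_range_succ', smul_sum]
  congr 1
  · refine sum_congr rfl fun j _ => ?_
    rw [smul_smul, ← pow_succ', show k - (i + 1) + (j + 1) = k - i + j by omega]
  · simp

lemma horner_self : horner k A k lam = Peval k A lam := by
  simp [horner, Peval]

def pencilBlock (k : ℕ) (A : ℕ → Mat n) (lam : ℂ) (i j : ℕ) : Mat n :=
  lam • T1Block k A i j - T0Block k A i j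

lemma Tpencil_eq_of_blocks :
    Tpencil k A lam = Matrix.of fun p q => pencilBlock k A lam p.1 q.1 p.2 q.2 := by
  ext p q
  simp [Tpencil, TT1, TT0, pencilBlock]

lemma Delta_eq_of_blocks :
    Delta k A lam = Matrix.of fun p b => DeltaBlock k A lam p.1 p.2 b := rfl

lemma pencilBlock_comm (i j : ℕ) : pencilBlock k A lam i j = pencilBlock k A lam j i := by
  unfold pencilBlock T1Block T0Block
  by_cases h : i = j
  · subst h; rfl
  · simp only [if_neg h, if_neg (Ne.symm h), or_comm]

lemma pencilBlock_eq_zero {i j : ℕ} (h : j ≠ i) (h₁ : j ≠ i + 1) (h₂ : i ≠ j + 1) :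
    pencilBlock k A lam i j = 0 := by
  simp [pencilBlock, T1Block, T0Block, Ne.symm h, h₁, h₂]

lemma pencilBlock_even_self (j : ℕ) :
    pencilBlock k A lam (2 * j) (2 * j) = lam • A (k - 2 * j) + A (k - 2 * j - 1) := by
  simp [pencilBlock, T1Block, T0Block]

lemma pencilBlock_odd_self (j : ℕ) : pencilBlock k A lam (2 * j + 1) (2 * j + 1) = 0 := by
  simp [pencilBlock, T1Block, T0Block]

lemma pencilBlock_even_succ (j : ℕ) : pencilBlock k A lam (2 * j) (2 * j + 1) = -1 := by
  simp [pencilBlock, T1Block, T0Block]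
  omega

lemma pencilBlock_odd_succ (j : ℕ) :
    pencilBlock k A lam (2 * j + 1) (2 * (j + 1)) = lam • 1 := by
  simp only [pencilBlock, T1Block, T0Block]
  split_ifs <;> first | omega | simp

section Odd

variable (m : ℕ)

lemma DeltaBlock_even (j : ℕ) :
    DeltaBlock (2 * m + 1) A lam (2 * j) = lam ^ (m - j) • 1 := by
  rw [DeltaBlock, if_pos (by omega), show (2 * m + 1 - 1 - 2 * j) / 2 = m - j by omega]

lemma DeltaBlock_odd (j : ℕ) :
    DeltaBlock (2 * m + 1) A lam (2 * j + 1)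
      = lam ^ (m - j) • horner (2 * m + 1) A (2 * j + 1) lam := by
  rw [DeltaBlock, if_neg (by omega), show (2 * m + 1 - (2 * j + 1)) / 2 = m - j by omega]

lemma sum_pencilBlock_odd_mul_DeltaBlock {j : ℕ} (hj : j < m) :
    ∑ q ∈ range (2 * m + 1),
      pencilBlock (2 * m + 1) A lam (2 * j + 1) q * DeltaBlock (2 * m + 1) A lam q = 0 := by
  rw [sum_range_eq_of_tridiagonal (i := 2 * j + 1) (by omega) _
    fun q h h₁ h₂ => by rw [pencilBlock_eq_zero A lam h h₁ h₂, zero_mul]]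
  rw [if_neg (by omega), if_pos (by omega), show 2 * j + 1 - 1 = 2 * j by omega,
    show 2 * j + 1 + 1 = 2 * (j + 1) by omega, pencilBlock_comm, pencilBlock_even_succ,
    pencilBlock_odd_self, pencilBlock_odd_succ, DeltaBlock_even, DeltaBlock_even,
    show m - j = m - (j + 1) + 1 by omega, pow_succ]
  simp only [zero_mul, add_zero, neg_mul, one_mul, smul_mul_smul, mul_one, mul_comm lam]
  exact neg_add_cancel _

lemma sum_pencilBlock_even_mul_DeltaBlock {j : ℕ} (hj : j ≤ m) :
    ∑ q ∈ range (2 * m + 1),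
      pencilBlock (2 * m + 1) A lam (2 * j) q * DeltaBlock (2 * m + 1) A lam q
      = if j = m then Peval (2 * m + 1) A lam else 0 := by
  rw [sum_range_eq_of_tridiagonal (i := 2 * j) (by omega) _
    fun q h h₁ h₂ => by rw [pencilBlock_eq_zero A lam h h₁ h₂, zero_mul]]
  have left_add_self : ((if 2 * j = 0 then 0 else
      pencilBlock (2 * m + 1) A lam (2 * j) (2 * j - 1) * DeltaBlock (2 * m + 1) A lam (2 * j - 1))
      + pencilBlock (2 * m + 1) A lam (2 * j) (2 * j) * DeltaBlock (2 * m + 1) A lam (2 * j))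
      = lam ^ (m - j) • horner (2 * m + 1) A (2 * j + 1) lam := by
    rw [pencilBlock_even_self, DeltaBlock_even]
    rcases j with _ | j
    · simp [horner_succ A lam (show 0 < 2 * m + 1 by omega), horner_zero]
    · rw [if_neg (by omega), show 2 * (j + 1) - 1 = 2 * j + 1 by omega, pencilBlock_comm,
        pencilBlock_odd_succ, DeltaBlock_odd, show 2 * (j + 1) = 2 * j + 1 + 1 by omega,
        horner_succ A lam (i := 2 * j + 1 + 1) (by omega),
        horner_succ A lam (i := 2 * j + 1) (by omega),
        show m - j = m - (j + 1) + 1 by omega, pow_succ,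
        show 2 * m + 1 - (2 * j + 1 + 1) - 1 = 2 * m + 1 - (2 * j + 1 + 1 + 1) by omega]
      simp only [Matrix.smul_mul, Matrix.mul_smul, Matrix.one_mul, Matrix.mul_one]
      module
  rw [left_add_self]
  rcases hj.lt_or_eq with hj | rfl
  · rw [if_pos (by omega), if_neg hj.ne, pencilBlock_even_succ, DeltaBlock_odd, neg_one_mul,
      add_neg_cancel]
  · rw [if_neg (by omega), if_pos rfl, Nat.sub_self, pow_zero, one_smul, horner_self, add_zero]

end Odd

lemma sum_pencilBlock_mul_DeltaBlock (hk : Odd k) {i : ℕ} (hi : i < k) :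
    ∑ q ∈ range k, pencilBlock k A lam i q * DeltaBlock k A lam q
      = if i = k - 1 then Peval k A lam else 0 := by
  obtain ⟨m, rfl⟩ := hk
  rcases Nat.even_or_odd' i with ⟨j, rfl | rfl⟩
  · rw [sum_pencilBlock_even_mul_DeltaBlock A lam m (by omega)]
    exact if_congr (by omega) rfl rfl
  · rw [sum_pencilBlock_odd_mul_DeltaBlock A lam m (by omega), if_neg (by omega)]

lemma Tpencil_mul_Delta (hk : Odd k) :
    Tpencil k A lam * Delta k A lam = ekI k n * Peval k A lam := by
  rw [Tpencil_eq_of_blocks, Delta_eq_of_blocks, Matrix.of_blocks_mul_of_blocks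
    (fun i j : Fin k => pencilBlock k A lam i j) (fun q : Fin k => DeltaBlock k A lam q)]
  ext ⟨p, a⟩ b
  rw [of_apply,
    Fin.sum_univ_eq_sum_range (fun q => pencilBlock k A lam p q * DeltaBlock k A lam q),
    sum_pencilBlock_mul_DeltaBlock A lam hk p.2]
  split_ifs with h <;> simp [ekI, mul_apply, h]

end

theorem stmt_7_general {n k : ℕ} (hk : Odd k) (A : ℕ → Mat n) (lam : ℂ) :
    Rpencil k A lam * (Smat k n * Rmat k n * Delta k A lam)
      = Smat k n * Rmat k n * ekI k n * Peval k A lam := by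
  rw [Rpencil, Matrix.mul_assoc _ (ekI k n), ← Tpencil_mul_Delta A lam hk]
  simp only [Matrix.mul_assoc]
  rw [← Matrix.mul_assoc (Smat k n) (Smat k n), Smat_mul_self, Matrix.one_mul,
    ← Matrix.mul_assoc (Rmat k n) (Rmat k n), Rmat_mul_self, Matrix.one_mul]

theorem stmt_7 {n k : ℕ} (hk : Odd k) (hk3 : 3 ≤ k) (A : ℕ → Mat n) (hAk : A k ≠ 0)
    (lam : ℂ) :
    Rpencil k A lam * (Smat k n * Rmat k n * Delta k A lam)
      = Smat k n * Rmat k n * ekI k n * Peval k A lam :=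
  stmt_7_general hk A lam

end MPoly
end
end

section
/- Let P(λ) = ∑_{i=0}^{k} A_i λ^i be an n×n complex matrix polynomial of odd degree k ≥ 3 with A_0 ≠ 0, let δ ∈ ℂ be nonzero, and let z ∈ ℂ^{kn} be nonzero. Write 𝒯_P(λ) = λ𝒯₁ − 𝒯₀ and 𝒯_{rev P}(λ) = λ𝒯̃₁ − 𝒯̃₀. Then η_{𝒯_P}(z, δ) = η_{𝒯_{rev P}}(R D z, 1/δ); that is, ‖𝒯_P(δ)z‖₂ / ((|δ| ‖𝒯₁‖₂ + ‖𝒯₀‖₂) ‖z‖₂) = ‖𝒯_{rev P}(1/δ)(R D z)‖₂ / ((|1/δ| ‖𝒯̃₁‖₂ + ‖𝒯̃₀‖₂) ‖R D z‖₂). -/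
open Finset Matrix

noncomputable section
namespace MPoly

variable {n : ℕ}

/-!
For odd `k` the matrix `U = R D` is a real signed permutation matrix which is Hermitian and unitary
(the sign of block `i` and of block `k - 1 - i` agree). Conjugating by `U` reverses the block order
and exchanges the two coefficients of the pencil: `𝒯̃₁ = -U 𝒯₀ U` and `𝒯̃₀ = -U 𝒯₁ U`. Hence
`𝒯_{rev P}(1/δ) (U z) = δ⁻¹ U 𝒯_P(δ) z`, and since `U` preserves both the Euclidean and the spectral
norm, the numerator and the denominator of the backward error are both scaled by `|δ|⁻¹`.
-/

section Norms

variable {ι : Type*} [Fintype ι]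

lemma vecNorm_eq_norm_toLp (x : ι → ℂ) : vecNorm x = ‖WithLp.toLp 2 x‖ := by
  rw [EuclideanSpace.norm_eq]
  rfl

lemma vecNorm_smul (c : ℂ) (x : ι → ℂ) : vecNorm (c • x) = ‖c‖ * vecNorm x := by
  rw [vecNorm_eq_norm_toLp, vecNorm_eq_norm_toLp, WithLp.toLp_smul, norm_smul]

variable [DecidableEq ι]

open scoped Matrix.Norms.L2Operator

lemma specNorm_eq_l2_opNorm (M : Matrix ι ι ℂ) : specNorm M = ‖M‖ := rfl

lemma vecNorm_mulVec_of_mem_unitary {U : Matrix ι ι ℂ} (hU : U ∈ unitary (Matrix ι ι ℂ))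
    (x : ι → ℂ) : vecNorm (U *ᵥ x) = vecNorm x := by
  rw [vecNorm_eq_norm_toLp, vecNorm_eq_norm_toLp, ← toEuclideanCLM_toLp]
  exact ContinuousLinearMap.norm_map_of_mem_unitary (Unitary.map_mem toEuclideanCLM hU) _

lemma specNorm_neg_mul_mul_of_mem_unitary {U V : Matrix ι ι ℂ} (hU : U ∈ unitary (Matrix ι ι ℂ))
    (hV : V ∈ unitary (Matrix ι ι ℂ)) (M : Matrix ι ι ℂ) :
    specNorm (-(U * M * V)) = specNorm M := by
  simp only [specNorm_eq_l2_opNorm, norm_neg, CStarRing.norm_mul_mem_unitary _ hV,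
    CStarRing.norm_mem_unitary_mul _ hU]

end Norms

section BackwardError

variable {ι : Type*} [Fintype ι] [DecidableEq ι]

def pencilBackwardError (L₁ L₀ : Matrix ι ι ℂ) (z : ι → ℂ) (δ : ℂ) : ℝ :=
  vecNorm ((δ • L₁ - L₀) *ᵥ z) / ((‖δ‖ * specNorm L₁ + specNorm L₀) * vecNorm z)

theorem pencilBackwardError_reverse {U : Matrix ι ι ℂ} (hU : U ∈ unitary (Matrix ι ι ℂ))
    (hU_adj : IsSelfAdjoint U) (L₁ L₀ : Matrix ι ι ℂ) (z : ι → ℂ) {δ : ℂ} (hδ : δ ≠ 0) :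
    pencilBackwardError (-(U * L₀ * U)) (-(U * L₁ * U)) (U *ᵥ z) δ⁻¹
      = pencilBackwardError L₁ L₀ z δ := by
  have hUU : U * U = 1 := by simpa [hU_adj.star_eq] using Unitary.star_mul_self_of_mem hU
  have hpencil : (δ⁻¹ • -(U * L₀ * U) - -(U * L₁ * U)) *ᵥ (U *ᵥ z)
      = δ⁻¹ • (U *ᵥ ((δ • L₁ - L₀) *ᵥ z)) := by
    simp only [mulVec_mulVec, ← smul_mulVec]
    congr 1
    simp only [Matrix.mul_sub, Matrix.sub_mul, Matrix.mul_smul, Matrix.smul_mul, Matrix.neg_mul,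
      smul_sub, smul_neg, smul_smul, inv_mul_cancel₀ hδ, one_smul, Matrix.mul_assoc, hUU,
      Matrix.mul_one]
    abel
  unfold pencilBackwardError
  rw [hpencil, vecNorm_smul, vecNorm_mulVec_of_mem_unitary hU, vecNorm_mulVec_of_mem_unitary hU,
    specNorm_neg_mul_mul_of_mem_unitary hU hU, specNorm_neg_mul_mul_of_mem_unitary hU hU, norm_inv]
  field_simp
  ring

end BackwardError

section BlockReversal

variable {k : ℕ}

lemma neg_one_pow_eq_of_add_eq (hk : Odd k) {i j : ℕ} (h : i + j = k - 1) :
    (-1 : ℂ) ^ i = (-1 : ℂ) ^ j := by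
  have := Nat.odd_iff.mp hk
  rw [neg_one_pow_eq_pow_mod_two, neg_one_pow_eq_pow_mod_two (n := j)]
  congr 1
  omega

def blockRev : Equiv.Perm (Fin k × Fin n) := Fin.revPerm.prodCongr (Equiv.refl _)

@[simp]
lemma blockRev_apply (p : Fin k × Fin n) : blockRev p = (p.1.rev, p.2) := rfl

@[simp]
lemma blockRev_symm : (blockRev : Equiv.Perm (Fin k × Fin n)).symm = blockRev := rfl

lemma neg_one_pow_blockRev (hk : Odd k) (p : Fin k × Fin n) :
    (-1 : ℂ) ^ (blockRev p).1.1 = (-1 : ℂ) ^ p.1.1 :=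
  neg_one_pow_eq_of_add_eq hk (by simp only [blockRev_apply, Fin.val_rev]; omega)

lemma Rmat_eq_toMatrix_blockRev : Rmat k n = (blockRev : Equiv.Perm _).toPEquiv.toMatrix := by
  ext p q
  have := p.1.isLt
  simp only [Rmat, of_apply, PEquiv.toMatrix_apply, Equiv.toPEquiv_apply, Option.mem_def,
    Option.some.injEq, blockRev_apply, Prod.ext_iff, Fin.ext_iff, Fin.val_rev]
  exact if_congr (by omega) rfl rfl

lemma Dmat_eq_diagonal : Dmat k n = diagonal fun p => (-1 : ℂ) ^ p.1.1 := by
  ext p q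
  simp [Dmat, diagonal_apply]

lemma Rmat_mul_Dmat_mul_mul_apply (hk : Odd k) (M : Matrix (Fin k × Fin n) (Fin k × Fin n) ℂ)
    (p q : Fin k × Fin n) :
    (Rmat k n * Dmat k n * M * (Rmat k n * Dmat k n)) p q
      = (-1 : ℂ) ^ (p.1.1 + q.1.1) * M (blockRev p) (blockRev q) := by
  rw [show Rmat k n * Dmat k n * M * (Rmat k n * Dmat k n)
      = Rmat k n * (Dmat k n * M * Rmat k n * Dmat k n) by simp only [Matrix.mul_assoc],
    Rmat_eq_toMatrix_blockRev, Dmat_eq_diagonal, PEquiv.toMatrix_toPEquiv_mul, submatrix_apply,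
    mul_diagonal, PEquiv.mul_toMatrix_toPEquiv, submatrix_apply, diagonal_mul, id, id,
    blockRev_symm, neg_one_pow_blockRev hk, pow_add]
  ring

lemma Rmat_mul_Dmat_mul_self (hk : Odd k) :
    Rmat k n * Dmat k n * (Rmat k n * Dmat k n) = 1 := by
  ext p q
  have h := Rmat_mul_Dmat_mul_mul_apply hk 1 p q
  rw [Matrix.mul_one] at h
  rw [h]
  by_cases hpq : p = q
  · rw [hpq, one_apply_eq, one_apply_eq, mul_one, Even.neg_one_pow ⟨_, rfl⟩]
  · rw [one_apply_ne hpq, one_apply_ne (blockRev.injective.ne hpq), mul_zero]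

lemma isSelfAdjoint_Rmat_mul_Dmat (hk : Odd k) : IsSelfAdjoint (Rmat k n * Dmat k n) := by
  ext p q
  have := p.1.isLt
  have := q.1.isLt
  simp only [star_apply, Dmat_eq_diagonal, mul_diagonal, Rmat, of_apply]
  split_ifs with h₁ h₂ h₂
  · simp [neg_one_pow_eq_of_add_eq hk h₂.1]
  · omega
  · omega
  · simp

lemma Rmat_mul_Dmat_mem_unitary (hk : Odd k) :
    Rmat k n * Dmat k n ∈ unitary (Matrix (Fin k × Fin n) (Fin k × Fin n) ℂ) := by
  rw [Unitary.mem_iff, (isSelfAdjoint_Rmat_mul_Dmat hk).star_eq, and_self]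
  exact Rmat_mul_Dmat_mul_self hk

lemma T1Block_rev (hk : Odd k) (A : ℕ → Mat n) {i j : ℕ} (hi : i < k) (hj : j < k) :
    T1Block k (fun m => A (k - m)) i j
      = -((-1 : ℂ) ^ (i + j) • T0Block k A (k - (i + 1)) (k - (j + 1))) := by
  have hk₂ := Nat.odd_iff.mp hk
  unfold T1Block T0Block
  split_ifs with hij <;> first | omega | skip
  · subst hij
    rw [show k - (k - (i + 1)) - 1 = k - (k - i) by omega, Even.neg_one_pow ⟨i, rfl⟩]
    simp
  · simp
  · rw [(Nat.odd_iff.mpr (by omega) : Odd (i + j)).neg_one_pow]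
    simp
  · simp

lemma T0Block_rev (hk : Odd k) (A : ℕ → Mat n) {i j : ℕ} (hi : i < k) (hj : j < k) :
    T0Block k (fun m => A (k - m)) i j
      = -((-1 : ℂ) ^ (i + j) • T1Block k A (k - (i + 1)) (k - (j + 1))) := by
  have hk₂ := Nat.odd_iff.mp hk
  unfold T1Block T0Block
  split_ifs with hij <;> first | omega | skip
  · subst hij
    rw [show k - (k - (i + 1)) = k - (k - i - 1) by omega, Even.neg_one_pow ⟨i, rfl⟩]
    simp
  · simp
  · rw [(Nat.odd_iff.mpr (by omega) : Odd (i + j)).neg_one_pow]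
    simp
  · simp

lemma TT1_rev (hk : Odd k) (A : ℕ → Mat n) :
    TT1 k (fun i => A (k - i)) = -(Rmat k n * Dmat k n * TT0 k A * (Rmat k n * Dmat k n)) := by
  ext p q
  rw [neg_apply, Rmat_mul_Dmat_mul_mul_apply hk]
  exact congr_fun₂ (T1Block_rev hk A p.1.isLt q.1.isLt) p.2 q.2

lemma TT0_rev (hk : Odd k) (A : ℕ → Mat n) :
    TT0 k (fun i => A (k - i)) = -(Rmat k n * Dmat k n * TT1 k A * (Rmat k n * Dmat k n)) := by
  ext p q
  rw [neg_apply, Rmat_mul_Dmat_mul_mul_apply hk]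
  exact congr_fun₂ (T0Block_rev hk A p.1.isLt q.1.isLt) p.2 q.2

end BlockReversal

theorem stmt_15_general {n k : ℕ} (hk : Odd k) (A : ℕ → Mat n)
    (δ : ℂ) (hδ : δ ≠ 0) (z : Fin k × Fin n → ℂ) :
    vecNorm (Tpencil k A δ *ᵥ z)
        / ((‖δ‖ * specNorm (TT1 k A) + specNorm (TT0 k A)) * vecNorm z)
      = vecNorm (Tpencil k (fun i => A (k - i)) δ⁻¹ *ᵥ ((Rmat k n * Dmat k n) *ᵥ z))
          / ((‖δ⁻¹‖ * specNorm (TT1 k (fun i => A (k - i)))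
                + specNorm (TT0 k (fun i => A (k - i))))
              * vecNorm ((Rmat k n * Dmat k n) *ᵥ z)) := by
  have h := pencilBackwardError_reverse (Rmat_mul_Dmat_mem_unitary hk)
    (isSelfAdjoint_Rmat_mul_Dmat hk) (TT1 k A) (TT0 k A) z hδ
  rw [← TT1_rev hk, ← TT0_rev hk] at h
  exact h.symm

theorem stmt_15 {n k : ℕ} (hk : Odd k) (hk3 : 3 ≤ k) (A : ℕ → Mat n)
    (hAk : A k ≠ 0) (hA0 : A 0 ≠ 0)
    (δ : ℂ) (hδ : δ ≠ 0) (z : Fin k × Fin n → ℂ) (hz : z ≠ 0) :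
    vecNorm (Tpencil k A δ *ᵥ z)
        / ((‖δ‖ * specNorm (TT1 k A) + specNorm (TT0 k A)) * vecNorm z)
      = vecNorm (Tpencil k (fun i => A (k - i)) δ⁻¹ *ᵥ ((Rmat k n * Dmat k n) *ᵥ z))
          / ((‖δ⁻¹‖ * specNorm (TT1 k (fun i => A (k - i)))
                + specNorm (TT0 k (fun i => A (k - i))))
              * vecNorm ((Rmat k n * Dmat k n) *ᵥ z)) :=
  stmt_15_general hk A δ hδ z

end MPoly
end
end
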